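/- arXiv:2506.06615 — 2 statements merged into one kernel-verified Lean document; each statement's English description precedes it below -/
import Mathlib

section
/- Suppose that for every directed edge (j,i) of a finite directed graph the degree ratio condition N^out/N^in = |N^in_i|/|N^out_j| holds, where N^out and N^in are the numbers of units with positive out-degree and positive in-degree respectively. Then for every assignment of real pairwise spillover effects τ_{i,j} to the edges, the outward spillover effect equals the inward spillover effect: τ^out = τ^in. -/
open Finset

/-- Out-neighbors of `j` in the directed graph `A` (where `A j i` means an edge `j → i`). -/
def Nout {V : Type*} [Fintype V] (A : V → V → Prop) [DecidableRel A] (j : V) : Finset V :=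
  Finset.univ.filter (fun i => A j i)

/-- In-neighbors of `i`. -/
def Nin {V : Type*} [Fintype V] (A : V → V → Prop) [DecidableRel A] (i : V) : Finset V :=
  Finset.univ.filter (fun j => A j i)

/-- Units with at least one out-neighbor. -/
def senders {V : Type*} [Fintype V] (A : V → V → Prop) [DecidableRel A] : Finset V :=
  Finset.univ.filter (fun j => (Nout A j).Nonempty)

/-- Units with at least one in-neighbor. -/
def receivers {V : Type*} [Fintype V] (A : V → V → Prop) [DecidableRel A] : Finset V :=
  Finset.univ.filter (fun i => (Nin A i).Nonempty)

/-- Outward spillover effect: average over senders of the mean pairwise effect on out-neighbors. -/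
noncomputable def tauOut {V : Type*} [Fintype V] (A : V → V → Prop) [DecidableRel A]
    (τ : V → V → ℝ) : ℝ :=
  (((senders A).card : ℝ))⁻¹ *
    ∑ j ∈ senders A, (((Nout A j).card : ℝ))⁻¹ * ∑ i ∈ Nout A j, τ i j

/-- Inward spillover effect: average over receivers of the mean pairwise effect from in-neighbors. -/
noncomputable def tauIn {V : Type*} [Fintype V] (A : V → V → Prop) [DecidableRel A]
    (τ : V → V → ℝ) : ℝ :=
  (((receivers A).card : ℝ))⁻¹ *
    ∑ i ∈ receivers A, (((Nin A i).card : ℝ))⁻¹ * ∑ j ∈ Nin A i, τ i j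

/-! Both effects are weighted sums of `τ i j` over the edges `j → i`, with weights
`(N^out |N^out_j|)⁻¹` and `(N^in |N^in_i|)⁻¹`; the degree-ratio condition says exactly that
these two weights agree on every edge. -/

section SpilloverEffects

variable {V : Type*} [Fintype V] (A : V → V → Prop) [DecidableRel A]

@[simp]
theorem mem_Nout {i j : V} : i ∈ Nout A j ↔ A j i := by
  simp [Nout]

@[simp]
theorem mem_Nin {i j : V} : j ∈ Nin A i ↔ A j i := by
  simp [Nin]

theorem card_receivers_ne_zero {i j : V} (h : A j i) : (receivers A).card ≠ 0 :=
  card_ne_zero_of_mem (by simpa [receivers] using ⟨j, (mem_Nin A).2 h⟩)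

theorem card_Nout_ne_zero {i j : V} (h : A j i) : (Nout A j).card ≠ 0 :=
  card_ne_zero_of_mem ((mem_Nout A).2 h)

theorem sum_senders_sum_Nout {M : Type*} [AddCommMonoid M] (f : V → V → M) :
    ∑ j ∈ senders A, ∑ i ∈ Nout A j, f j i = ∑ j, ∑ i ∈ Nout A j, f j i :=
  sum_filter_of_ne fun _ _ h => nonempty_of_sum_ne_zero h

theorem sum_receivers_sum_Nin {M : Type*} [AddCommMonoid M] (f : V → V → M) :
    ∑ i ∈ receivers A, ∑ j ∈ Nin A i, f j i = ∑ i, ∑ j ∈ Nin A i, f j i :=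
  sum_filter_of_ne fun _ _ h => nonempty_of_sum_ne_zero h

theorem sum_sum_Nout_eq_sum_sum_Nin {M : Type*} [AddCommMonoid M] (f : V → V → M) :
    ∑ j, ∑ i ∈ Nout A j, f j i = ∑ i, ∑ j ∈ Nin A i, f j i :=
  sum_comm' fun j i => by simp

theorem tauOut_eq_sum_edges (τ : V → V → ℝ) :
    tauOut A τ = ∑ j, ∑ i ∈ Nout A j, (((senders A).card * (Nout A j).card : ℝ))⁻¹ * τ i j := by
  simp only [tauOut, mul_sum, ← mul_assoc, mul_inv]
  exact sum_senders_sum_Nout A _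

theorem tauIn_eq_sum_edges (τ : V → V → ℝ) :
    tauIn A τ = ∑ i, ∑ j ∈ Nin A i, (((receivers A).card * (Nin A i).card : ℝ))⁻¹ * τ i j := by
  simp only [tauIn, mul_sum, ← mul_assoc, mul_inv]
  exact sum_receivers_sum_Nin A _

theorem edge_weight_eq_of_ratio {i j : V} (h : A j i)
    (hratio : ((senders A).card : ℝ) / ((receivers A).card : ℝ)
      = ((Nin A i).card : ℝ) / ((Nout A j).card : ℝ)) :
    (((senders A).card * (Nout A j).card : ℝ))⁻¹
      = (((receivers A).card * (Nin A i).card : ℝ))⁻¹ := by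
  rw [div_eq_div_iff (mod_cast card_receivers_ne_zero A h) (mod_cast card_Nout_ne_zero A h)]
    at hratio
  rw [hratio, mul_comm]

end SpilloverEffects

theorem stmt4_general {V : Type*} [Fintype V] (A : V → V → Prop) [DecidableRel A]
    (hratio : ∀ j i, A j i →
      ((senders A).card : ℝ) / ((receivers A).card : ℝ)
        = ((Nin A i).card : ℝ) / ((Nout A j).card : ℝ)) :
    ∀ τ : V → V → ℝ, tauOut A τ = tauIn A τ := by
  intro τ
  rw [tauOut_eq_sum_edges, tauIn_eq_sum_edges, sum_sum_Nout_eq_sum_sum_Nin]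
  refine sum_congr rfl fun i _ => sum_congr rfl fun j hj => ?_
  rw [mem_Nin] at hj
  rw [edge_weight_eq_of_ratio A hj (hratio j i hj)]

/-- if for every directed edge `(j,i)` the degree-ratio condition
`N^out/N^in = |N^in_i|/|N^out_j|` holds, then for every assignment of pairwise spillover
effects the outward and inward spillover effects coincide. -/
theorem stmt4 {V : Type*} [Fintype V] (A : V → V → Prop) [DecidableRel A]
    (hout : 0 < (senders A).card) (hin : 0 < (receivers A).card)
    (hratio : ∀ j i, A j i →
      ((senders A).card : ℝ) / ((receivers A).card : ℝ)
        = ((Nin A i).card : ℝ) / ((Nout A j).card : ℝ)) :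
    ∀ τ : V → V → ℝ, tauOut A τ = tauIn A τ :=
  stmt4_general A hratio
end

section
/- Conservative variance bound for the outward spillover Horvitz–Thompson estimator: under overlap, the clustered structure (potential outcomes in cluster k depend only on treatments in cluster k, and treatments are assigned independently across clusters), Var(τ̂^out) ≤ V^c := (1/(N^out)²)·Σ_k Σ_{j∈N^out_k} |N^out_k|·E[V_{1j}² + V_{0j}²], where V_{zj} = W_j(Z)·1{Z_j=z}·Ȳ^out_j(Z), N^out_k is the set of units in cluster k with positive out-degree, and N^out = Σ_k |N^out_k|. -/
/-!
Grouping the senders by cluster writes `N^out · τ̂^out` as a sum of cluster totals `D_k`.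
Partial interference and within-cluster edges make `D_k` a function of the cluster-`k`
treatments alone, and since `P_β` factorizes over clusters these totals are uncorrelated, so
`Var (∑ D_k) ≤ ∑ E[D_k²]`. Cauchy–Schwarz bounds `E[D_k²]` by
`|N^out_k| · ∑_j E[(V_{1j} - V_{0j})²]`, and `V_{1j} V_{0j} = 0` because `Z_j` cannot be both
`1` and `0`.
-/

open Finset

/-- Expectation on a finite probability space. -/
noncomputable def pexp {Ω : Type*} [Fintype Ω] (p : Ω → ℝ) (f : Ω → ℝ) : ℝ :=
  ∑ ω, p ω * f ω

/-- Variance on a finite probability space. -/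
noncomputable def pvar {Ω : Type*} [Fintype Ω] (p : Ω → ℝ) (f : Ω → ℝ) : ℝ :=
  pexp p (fun ω => (f ω - pexp p f) ^ 2)

/-- Average observed outcome among the out-neighbors of `j`. -/
noncomputable def Ybarout {V : Type*} [Fintype V] (A : V → V → Prop) [DecidableRel A]
    (Y : V → (V → Bool) → ℝ) (j : V) (z : V → Bool) : ℝ :=
  (((Nout A j).card : ℝ))⁻¹ * ∑ i ∈ Nout A j, Y i z

/-- `V_{zj}` : the weighted observed mean outcome of `j`'s out-neighbors when `Z_j = b`. -/
noncomputable def Vterm {V : Type*} [Fintype V] (A : V → V → Prop) [DecidableRel A]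
    (W : V → (V → Bool) → ℝ) (Y : V → (V → Bool) → ℝ) (b : Bool) (j : V)
    (z : V → Bool) : ℝ :=
  W j z * (if z j = b then 1 else 0) * Ybarout A Y j z

section FiniteExpectation

variable {Ω : Type*} [Fintype Ω] (p : Ω → ℝ)

lemma pexp_sum {ι : Type*} (s : Finset ι) (f : ι → Ω → ℝ) :
    pexp p (fun ω => ∑ i ∈ s, f i ω) = ∑ i ∈ s, pexp p (f i) := by
  simp only [pexp, mul_sum]
  exact sum_comm

lemma pexp_const_mul (c : ℝ) (f : Ω → ℝ) :
    pexp p (fun ω => c * f ω) = c * pexp p f := by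
  simp only [pexp, mul_sum]
  exact sum_congr rfl fun ω _ => mul_left_comm _ _ _

lemma pvar_const_mul (c : ℝ) (f : Ω → ℝ) :
    pvar p (fun ω => c * f ω) = c ^ 2 * pvar p f := by
  simp only [pvar, pexp_const_mul, ← mul_sub, mul_pow]

lemma pvar_eq_pexp_sq_sub_sq (h1 : ∑ ω, p ω = 1) (f : Ω → ℝ) :
    pvar p f = pexp p (fun ω => f ω ^ 2) - pexp p f ^ 2 := by
  have hexpand : ∀ ω, p ω * (f ω - pexp p f) ^ 2
      = p ω * f ω ^ 2 - 2 * pexp p f * (p ω * f ω) + pexp p f ^ 2 * p ω := fun ω => by ring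
  change ∑ ω, p ω * (f ω - pexp p f) ^ 2 = _
  rw [sum_congr rfl fun ω _ => hexpand ω, sum_add_distrib, sum_sub_distrib, ← mul_sum, ← mul_sum,
    h1]
  unfold pexp
  ring

lemma pvar_sum_le_sum_pexp_sq {ι : Type*} (h1 : ∑ ω, p ω = 1) (s : Finset ι) (g : ι → Ω → ℝ)
    (huncorr : ∀ i ∈ s, ∀ j ∈ s, i ≠ j →
      pexp p (fun ω => g i ω * g j ω) = pexp p (g i) * pexp p (g j)) :
    pvar p (fun ω => ∑ i ∈ s, g i ω) ≤ ∑ i ∈ s, pexp p (fun ω => g i ω ^ 2) := by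
  rw [pvar_eq_pexp_sq_sub_sq p h1, pexp_sum]
  simp only [sq, sum_mul_sum, pexp_sum, ← sum_sub_distrib]
  refine sum_le_sum fun i hi => ?_
  rw [sum_eq_single_of_mem i hi fun j hj hji => by rw [huncorr i hi j hj hji.symm, sub_self]]
  linarith [mul_self_nonneg (pexp p (g i))]

lemma pexp_sq_sum_le_sum_card_mul {ι : Type*} (hp : ∀ ω, 0 ≤ p ω) (s : Finset ι)
    (f : ι → Ω → ℝ) :
    pexp p (fun ω => (∑ i ∈ s, f i ω) ^ 2) ≤ ∑ i ∈ s, (#s : ℝ) * pexp p (fun ω => f i ω ^ 2) := by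
  rw [← mul_sum, ← pexp_sum, ← pexp_const_mul]
  exact sum_le_sum fun ω _ => mul_le_mul_of_nonneg_left sq_sum_le_card_mul_sum_sq (hp ω)

end FiniteExpectation

section Clusters

variable {V K β : Type*} (cl : V → K)

def ClusterLocal {γ : Type*} (k : K) (f : (V → β) → γ) : Prop :=
  ∀ z z', (∀ v, cl v = k → z v = z' v) → f z = f z'

variable {cl}

lemma ClusterLocal.sum {ι M : Type*} [AddCommMonoid M] {k : K} {s : Finset ι}
    {f : ι → (V → β) → M}
    (hf : ∀ i ∈ s, ClusterLocal cl k (f i)) : ClusterLocal cl k (fun z => ∑ i ∈ s, f i z) :=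
  fun z z' h => sum_congr rfl fun i hi => hf i hi z z' h

lemma ClusterLocal.comp_update [DecidableEq V] {γ : Type*} {k : K} {f : (V → β) → γ}
    (hf : ClusterLocal cl k f) (j : V) (c : β) :
    ClusterLocal cl k (fun z => f (Function.update z j c)) := by
  intro z z' h
  refine hf _ _ fun v hv => ?_
  simp only [Function.update_apply, h v hv]

variable (cl) [DecidableEq K]

def splice (k : K) (z w : V → β) : V → β :=
  fun v => if cl v = k then z v else w v

lemma splice_splice (k : K) (z w : V → β) :
    splice cl k (splice cl k z w) (splice cl k w z) = z := by
  funext v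
  unfold splice
  split_ifs <;> rfl

def spliceSwap (k : K) : Equiv.Perm ((V → β) × (V → β)) :=
  Function.Involutive.toPerm (fun zw => (splice cl k zw.1 zw.2, splice cl k zw.2 zw.1))
    fun _ => Prod.ext (splice_splice cl k _ _) (splice_splice cl k _ _)

lemma spliceSwap_apply (k : K) (zw : (V → β) × (V → β)) :
    spliceSwap cl k zw = (splice cl k zw.1 zw.2, splice cl k zw.2 zw.1) :=
  rfl

variable {cl}

lemma ClusterLocal.apply_splice_left {γ : Type*} {k : K} {f : (V → β) → γ}
    (hf : ClusterLocal cl k f) (z w : V → β) : f (splice cl k z w) = f z :=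
  hf _ _ fun _ hv => if_pos hv

lemma ClusterLocal.apply_splice_right {γ : Type*} {k k' : K} {f : (V → β) → γ}
    (hf : ClusterLocal cl k' f) (hkk' : k ≠ k') (z w : V → β) : f (splice cl k z w) = f w :=
  hf _ _ fun _ hv => if_neg (hv ▸ hkk'.symm)

lemma prod_splice_mul_prod_splice [Fintype K] {M : Type*} [CommMonoid M]
    {q : K → (V → β) → M} (hq : ∀ l, ClusterLocal cl l (q l)) (k : K) (z w : V → β) :
    (∏ l, q l (splice cl k z w)) * ∏ l, q l (splice cl k w z) = (∏ l, q l z) * ∏ l, q l w := by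
  simp only [← prod_mul_distrib]
  refine prod_congr rfl fun l _ => ?_
  rcases eq_or_ne k l with rfl | hkl
  · rw [(hq k).apply_splice_left, (hq k).apply_splice_left]
  · rw [(hq l).apply_splice_right hkl, (hq l).apply_splice_right hkl, mul_comm]

/-- The factors `q l` need not be normalized separately: both sides are written as sums over
pairs of assignments, which `spliceSwap` matches term by term. -/
lemma pexp_mul_eq_of_clusterLocal [Fintype V] [DecidableEq V] [Fintype K] [Fintype β]
    (q : K → (V → β) → ℝ) (hq : ∀ l, ClusterLocal cl l (q l))
    (P : (V → β) → ℝ) (hP : ∀ z, P z = ∏ l, q l z) (h1 : ∑ z, P z = 1)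
    {k k' : K} (hkk' : k ≠ k') {φ ψ : (V → β) → ℝ}
    (hφ : ClusterLocal cl k φ) (hψ : ClusterLocal cl k' ψ) :
    pexp P (fun z => φ z * ψ z) = pexp P φ * pexp P ψ := by
  have hswap : ∀ z w, P (splice cl k z w) * P (splice cl k w z) = P z * P w := fun z w => by
    simp only [hP, prod_splice_mul_prod_splice hq]
  calc pexp P (fun z => φ z * ψ z)
      = ∑ zw : (V → β) × (V → β), P zw.1 * P zw.2 * (φ zw.1 * ψ zw.1) := by
        rw [← mul_one (pexp P _), ← h1, pexp, sum_mul_sum, Fintype.sum_prod_type]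
        exact sum_congr rfl fun z _ => sum_congr rfl fun w _ => by ring
    _ = ∑ zw : (V → β) × (V → β), P zw.1 * P zw.2 * (φ zw.1 * ψ zw.2) := by
        rw [← Equiv.sum_comp (spliceSwap cl k) fun zw => P zw.1 * P zw.2 * (φ zw.1 * ψ zw.2)]
        refine Fintype.sum_congr _ _ fun zw => ?_
        simp only [spliceSwap_apply, hswap,
          hφ.apply_splice_left, hψ.apply_splice_right hkk']
    _ = pexp P φ * pexp P ψ := by
        simp only [Fintype.sum_prod_type, pexp, sum_mul_sum]
        exact sum_congr rfl fun z _ => sum_congr rfl fun w _ => by ring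

end Clusters

section Estimator

variable {V K : Type*} {A : V → V → Prop} [DecidableRel A] {cl : V → K}

lemma ybarout_clusterLocal [Fintype V] (hwithin : ∀ j i, A j i → cl i = cl j)
    {Y : V → (V → Bool) → ℝ} (hY : ∀ i, ClusterLocal cl (cl i) (Y i)) (j : V) :
    ClusterLocal cl (cl j) (Ybarout A Y j) := by
  intro z z' h
  unfold Ybarout
  congr 1
  exact sum_congr rfl fun i hi =>
    hY i z z' fun v hv => h v (hv.trans (hwithin j i (mem_filter.mp hi).2))

lemma weight_clusterLocal [DecidableEq V] {pk αk : K → (V → Bool) → ℝ}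
    (hpk : ∀ k, ClusterLocal cl k (pk k)) (hαk : ∀ k, ClusterLocal cl k (αk k))
    {W : V → (V → Bool) → ℝ}
    (hW : ∀ j z, W j z =
      if 0 < pk (cl j) z then
        (αk (cl j) (Function.update z j true) + αk (cl j) (Function.update z j false))
          / pk (cl j) z
      else 0) (j : V) :
    ClusterLocal cl (cl j) (W j) := by
  intro z z' h
  have hupdate : ∀ c, αk (cl j) (Function.update z j c) = αk (cl j) (Function.update z' j c) :=
    fun c => (hαk _).comp_update j c z z' h
  rw [hW, hW, hpk _ z z' h, hupdate, hupdate]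

lemma vterm_clusterLocal [Fintype V] {W Y : V → (V → Bool) → ℝ} {j : V}
    (hW : ClusterLocal cl (cl j) (W j)) (hY : ClusterLocal cl (cl j) (Ybarout A Y j))
    (b : Bool) : ClusterLocal cl (cl j) (Vterm A W Y b j) := by
  intro z z' h
  simp only [Vterm, hW z z' h, hY z z' h, h j rfl]

lemma vterm_sub_sq [Fintype V] (W Y : V → (V → Bool) → ℝ) (j : V) (z : V → Bool) :
    (Vterm A W Y true j z - Vterm A W Y false j z) ^ 2
      = Vterm A W Y true j z ^ 2 + Vterm A W Y false j z ^ 2 := by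
  cases hz : z j <;> simp [Vterm, hz]

end Estimator

theorem stmt14_general {V K : Type*} [Fintype V] [DecidableEq V] [Fintype K] [DecidableEq K]
    (A : V → V → Prop) [DecidableRel A] (cl : V → K)
    (hwithin : ∀ j i, A j i → cl i = cl j)
    (Y : V → (V → Bool) → ℝ)
    (hPI : ∀ i z z', (∀ v, cl v = cl i → z v = z' v) → Y i z = Y i z')
    (pk αk : K → (V → Bool) → ℝ)
    (hpk0 : ∀ k z, 0 ≤ pk k z)
    (hpkloc : ∀ k z z', (∀ v, cl v = k → z v = z' v) → pk k z = pk k z')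
    (hαkloc : ∀ k z z', (∀ v, cl v = k → z v = z' v) → αk k z = αk k z')
    (Pβ : (V → Bool) → ℝ) (hPβ : ∀ z, Pβ z = ∏ k, pk k z)
    (hβ1 : ∑ z : V → Bool, Pβ z = 1)
    (W : V → (V → Bool) → ℝ)
    (hW : ∀ j z, W j z =
      if 0 < pk (cl j) z then
        (αk (cl j) (Function.update z j true) + αk (cl j) (Function.update z j false))
          / pk (cl j) z
      else 0) :
    pvar Pβ (fun z => (((senders A).card : ℝ))⁻¹ *
        ∑ j ∈ senders A, (Vterm A W Y true j z - Vterm A W Y false j z))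
      ≤ ((((senders A).card : ℝ)) ^ 2)⁻¹ *
          ∑ k : K, ∑ j ∈ (senders A).filter (fun j' => cl j' = k),
            ((((senders A).filter (fun j' => cl j' = k)).card : ℝ)) *
              pexp Pβ (fun z =>
                (Vterm A W Y true j z) ^ 2 + (Vterm A W Y false j z) ^ 2) := by
  have hPβ0 : ∀ z, 0 ≤ Pβ z := fun z => hPβ z ▸ prod_nonneg fun k _ => hpk0 k z
  have hV : ∀ b j, ClusterLocal cl (cl j) (Vterm A W Y b j) := fun b j =>
    vterm_clusterLocal (weight_clusterLocal hpkloc hαkloc hW j)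
      (ybarout_clusterLocal hwithin hPI j) b
  have hD : ∀ k, ClusterLocal cl k (fun z => ∑ j ∈ (senders A).filter (fun j' => cl j' = k),
      (Vterm A W Y true j z - Vterm A W Y false j z)) := fun k =>
    ClusterLocal.sum fun j hj z z' h => by
      obtain rfl := (mem_filter.mp hj).2
      rw [hV true j z z' h, hV false j z z' h]
  simp only [← sum_fiberwise (senders A) cl, pvar_const_mul, inv_pow]
  refine mul_le_mul_of_nonneg_left ?_ (by positivity)
  calc _ ≤ ∑ k, pexp Pβ (fun z => (∑ j ∈ (senders A).filter (fun j' => cl j' = k),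
          (Vterm A W Y true j z - Vterm A W Y false j z)) ^ 2) :=
        pvar_sum_le_sum_pexp_sq Pβ hβ1 _ _ fun k _ l _ hkl =>
          pexp_mul_eq_of_clusterLocal pk hpkloc Pβ hPβ hβ1 hkl (hD k) (hD l)
    _ ≤ _ := sum_le_sum fun k _ =>
        (pexp_sq_sum_le_sum_card_mul Pβ hPβ0 _ _).trans_eq (by simp only [vterm_sub_sq])

/-- conservative variance bound for the outward spillover Horvitz–Thompson
estimator.  Under overlap, partial interference (outcomes depend only on the treatments of
their own cluster), within-cluster edges, and treatments assigned independently across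
clusters (the realized law `P_β` factorizes into nonnegative cluster-local factors `pk`):
`Var(τ̂^out) ≤ V^c = (1/(N^out)²)·Σ_k Σ_{j∈N^out_k} |N^out_k|·E[V_{1j}² + V_{0j}²]`. -/
theorem stmt14 {V K : Type*} [Fintype V] [DecidableEq V] [Fintype K] [DecidableEq K]
    (A : V → V → Prop) [DecidableRel A] (cl : V → K)
    (hwithin : ∀ j i, A j i → cl i = cl j)
    (Y : V → (V → Bool) → ℝ)
    (hPI : ∀ i z z', (∀ v, cl v = cl i → z v = z' v) → Y i z = Y i z')
    (pk αk : K → (V → Bool) → ℝ)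
    (hpk0 : ∀ k z, 0 ≤ pk k z) (hαk0 : ∀ k z, 0 ≤ αk k z)
    (hpkloc : ∀ k z z', (∀ v, cl v = k → z v = z' v) → pk k z = pk k z')
    (hαkloc : ∀ k z z', (∀ v, cl v = k → z v = z' v) → αk k z = αk k z')
    (Pβ : (V → Bool) → ℝ) (hPβ : ∀ z, Pβ z = ∏ k, pk k z)
    (hβ1 : ∑ z : V → Bool, Pβ z = 1)
    (overlap : ∀ k z, 0 < αk k z → 0 < pk k z)
    (W : V → (V → Bool) → ℝ)
    (hW : ∀ j z, W j z =
      if 0 < pk (cl j) z then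
        (αk (cl j) (Function.update z j true) + αk (cl j) (Function.update z j false))
          / pk (cl j) z
      else 0)
    (hNout : 0 < (senders A).card) :
    pvar Pβ (fun z => (((senders A).card : ℝ))⁻¹ *
        ∑ j ∈ senders A, (Vterm A W Y true j z - Vterm A W Y false j z))
      ≤ ((((senders A).card : ℝ)) ^ 2)⁻¹ *
          ∑ k : K, ∑ j ∈ (senders A).filter (fun j' => cl j' = k),
            ((((senders A).filter (fun j' => cl j' = k)).card : ℝ)) *
              pexp Pβ (fun z =>
                (Vterm A W Y true j z) ^ 2 + (Vterm A W Y false j z) ^ 2) :=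
  stmt14_general A cl hwithin Y hPI pk αk hpk0 hpkloc hαkloc Pβ hPβ hβ1 W hW
end
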